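/- Let N ≥ 1, let p_1,…,p_N, p̄_1,…,p̄_N, q_1,…,q_N, q̄_1,…,q̄_N ∈ ℂ be nonzero with p_i + p̄_j ≠ 0 and q_i + q̄_j ≠ 0 for all i,j, let μ, ν ∈ ℂ, and let a₁, a₂, b₁, b₂ ∈ ℝ be nonzero with 1 − a₁ p_i ≠ 0, 1 + a₁ p̄_j ≠ 0, 1 − a₂ q_i ≠ 0, 1 + a₂ q̄_j ≠ 0, 1 − b₁/p_i ≠ 0, 1 + b₁/p̄_j ≠ 0, 1 − b₂/q_i ≠ 0, 1 + b₂/q̄_j ≠ 0 for all i,j. For n, k₁, l₁, m, k₂, l₂ ∈ ℤ define: A(n,k₁,l₁) the N×N matrix with entry (μ p̄_j/(p_i+p̄_j))·(−p_i/p̄_j)^n·((1−a₁p_i)/(1+a₁p̄_j))^{−k₁}·((1−b₁/p_i)/(1+b₁/p̄_j))^{−l₁}; Ã(n,k₁,l₁) with entry (−μ p_i/(p_i+p̄_j))·(−p_i/p̄_j)^n·((1−a₁p_i)/(1+a₁p̄_j))^{−k₁}·((1−b₁/p_i)/(1+b₁/p̄_j))^{−l₁}; B(m,k₂,l₂) with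 entry (ν/(q_i+q̄_j))·(−q_i/q̄_j)^m·((1−a₂q_i)/(1+a₂q̄_j))^{−k₂}·((1−b₂/q_i)/(1+b₂/q̄_j))^{−l₂}; row vectors Φ(n,k₁,l₁) with j-th entry p_j^n (1−a₁p_j)^{−k₁}(1−b₁/p_j)^{−l₁}, Φ̄(n,k₁,l₁) with j-th entry (−p̄_j)^{−n}(1+a₁p̄_j)^{k₁}(1+b₁/p̄_j)^{l₁}, Ψ(m,k₂,l₂) with j-th entry q_j^m (1−a₂q_j)^{−k₂}(1−b₂/q_j)^{−l₂}, Ψ̄(m,k₂,l₂) with j-th entry (−q̄_j)^{−m}(1+a₂q̄_j)^{k₂}(1+b₂/q̄_j)^{l₂}. Set f^{m,k₂,l₂}_{n,k₁,l₁} = det[[A, I],[−I, B]], g^{m,k₂,l₂}_{n,k₁,l₁} = det[[A, I, Φᵀ],[−I, B, 0],[0, −Ψ̄, 0]], and ḡ^{m,k₂,l₂}_{n,k₁,l₁} = det[[Ã, I, 0],[−I, B, Ψᵀ],[−Φ̄, 0, 0]] (with all blocks evaluated at the indicated indices). Then for all n, k₁, l₁, m, k₂, l₂ ∈ ℤ: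 (1/a₂)·(f^{m,k₂+1,l₂}_{n+1,k₁,l₁}·f^{m,k₂,l₂}_{n,k₁,l₁} − f^{m,k₂,l₂}_{n+1,k₁,l₁}·f^{m,k₂+1,l₂}_{n,k₁,l₁}) = μ·ν·g^{m,k₂,l₂}_{n,k₁,l₁}·ḡ^{m,k₂+1,l₂}_{n,k₁,l₁}. -/

import Mathlib

/-!
Write `F` for the block matrix `[[A, I], [−I, B]]` at `(n, k₁, l₁; m, k₂, l₂)`. Raising `n` by one
changes `A` by the rank-one matrix `−μ Φᵀ Φ̄`, raising `k₂` by one changes `B` by the rank-one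
matrix `a₂ ν Ψ(k₂ + 1)ᵀ Ψ̄(k₂)`, and `Ã(n) = A(n + 1)`. The bilinear equation is then the
Jacobi-type identity
`det (F + α c₁ r₁ + β c₂ r₂) det F − det (F + α c₁ r₁) det (F + β c₂ r₂) = −α β ⟨F | c₁, r₂⟩ ⟨F | c₂, r₁⟩`
for bordered determinants `⟨F | c, r⟩`, together with the invariance of `⟨F | c₂, r₁⟩` under
`F ↦ F + α c₁ r₁ + β c₂ r₂`, which is a sequence of row and column operations with the border.
For invertible `F` the identity follows from the matrix determinant lemma; in general one applies
it to the generic matrix `X + F` over the fraction field of `R[X]` and specializes at `X = 0`.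
-/

open Matrix

/-- Determinant of the 2N×2N block matrix `[[A, I], [−I, B]]`. -/
noncomputable def blockDet {N : ℕ} (A B : Matrix (Fin N) (Fin N) ℂ) : ℂ :=
  (Matrix.fromBlocks A (1 : Matrix (Fin N) (Fin N) ℂ)
    (-1 : Matrix (Fin N) (Fin N) ℂ) B).det

/-- Determinant of the bordered (2N+1)×(2N+1) matrix obtained from the block matrix
`[[A, I], [−I, B]]` by appending the column vector `col` on the right and the row
vector `row` at the bottom, with `0` in the corner. -/
noncomputable def borderedDet {N : ℕ} (A B : Matrix (Fin N) (Fin N) ℂ)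
    (col row : (Fin N ⊕ Fin N) → ℂ) : ℂ :=
  (Matrix.fromBlocks
    (Matrix.fromBlocks A (1 : Matrix (Fin N) (Fin N) ℂ)
      (-1 : Matrix (Fin N) (Fin N) ℂ) B)
    (Matrix.of fun i (_ : Fin 1) => col i)
    (Matrix.of fun (_ : Fin 1) j => row j)
    (0 : Matrix (Fin 1) (Fin 1) ℂ)).det

open Polynomial

namespace Matrix

variable {ι R : Type*} [Fintype ι] [DecidableEq ι] [CommRing R]

noncomputable def borderDet (M : Matrix ι ι R) (c r : ι → R) : R :=
  (fromBlocks M (of fun i (_ : Fin 1) => c i) (of fun (_ : Fin 1) j => r j) 0).det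

theorem borderDet_eq_of_isUnit {M : Matrix ι ι R} (hM : IsUnit M.det) (c r : ι → R) :
    borderDet M c r = -(M.det * (r ᵥ* M⁻¹ ⬝ᵥ c)) := by
  have : Invertible M := M.invertibleOfIsUnitDet hM
  rw [borderDet, det_fromBlocks₁₁, invOf_eq_nonsing_inv, det_fin_one]
  simp [mul_apply, vecMul, dotProduct, Finset.sum_mul]

theorem borderDet_neg_row (M : Matrix ι ι R) (c r : ι → R) :
    borderDet M c (-r) = -borderDet M c r := by
  have h : fromBlocks M (of fun i (_ : Fin 1) => c i) (of fun (_ : Fin 1) j => (-r) j) 0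
      = fromBlocks 1 0 0 (-1) *
        fromBlocks M (of fun i (_ : Fin 1) => c i) (of fun (_ : Fin 1) j => r j) 0 := by
    rw [fromBlocks_multiply]; congr 1 <;> ext <;> simp
  rw [borderDet, borderDet, h, det_mul, det_fromBlocks_zero₂₁]
  simp

theorem borderDet_map {S : Type*} [CommRing S] (f : R →+* S) (M : Matrix ι ι R) (c r : ι → R) :
    f (borderDet M c r) = borderDet (f.mapMatrix M) (f ∘ c) (f ∘ r) := by
  rw [borderDet, borderDet, RingHom.map_det]
  congr 1
  ext (i | i) (j | j) <;> simp

theorem borderDet_add_smul_vecMulVec_add_smul_vecMulVec (M : Matrix ι ι R) (c₁ c₂ r₁ r₂ : ι → R)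
    (α β : R) :
    borderDet (M + α • vecMulVec c₁ r₁ + β • vecMulVec c₂ r₂) c₂ r₁ = borderDet M c₂ r₁ := by
  let L : Matrix (ι ⊕ Fin 1) (ι ⊕ Fin 1) R := fromBlocks 1 (of fun i _ => α * c₁ i) 0 1
  let U : Matrix (ι ⊕ Fin 1) (ι ⊕ Fin 1) R := fromBlocks 1 0 (of fun _ j => β * r₂ j) 1
  have h : L * fromBlocks M (of fun i (_ : Fin 1) => c₂ i) (of fun (_ : Fin 1) j => r₁ j) 0 * U
      = fromBlocks (M + α • vecMulVec c₁ r₁ + β • vecMulVec c₂ r₂)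
          (of fun i (_ : Fin 1) => c₂ i) (of fun (_ : Fin 1) j => r₁ j) 0 := by
    simp only [L, U, fromBlocks_multiply]
    congr 1 <;> ext <;> simp [mul_apply, vecMulVec_apply, mul_assoc, mul_left_comm]
  rw [borderDet, borderDet, ← h, det_mul, det_mul, det_fromBlocks_zero₂₁, det_fromBlocks_zero₁₂]
  simp

theorem det_add_smul_vecMulVec_add_smul_vecMulVec_of_isUnit {M : Matrix ι ι R}
    (hM : IsUnit M.det) (c₁ c₂ r₁ r₂ : ι → R) (α β : R) :
    (M + α • vecMulVec c₁ r₁ + β • vecMulVec c₂ r₂).det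
      = M.det * ((1 + α * (r₁ ᵥ* M⁻¹ ⬝ᵥ c₁)) * (1 + β * (r₂ ᵥ* M⁻¹ ⬝ᵥ c₂))
          - α * β * (r₁ ᵥ* M⁻¹ ⬝ᵥ c₂) * (r₂ ᵥ* M⁻¹ ⬝ᵥ c₁)) := by
  let U : Matrix ι (Fin 2) R := of fun i => ![c₁ i, c₂ i]
  let V : Matrix (Fin 2) ι R := of ![α • r₁, β • r₂]
  have hUV : U * V = α • vecMulVec c₁ r₁ + β • vecMulVec c₂ r₂ := by
    ext i j
    simp [U, V, mul_apply, Fin.sum_univ_two, vecMulVec_apply, mul_left_comm]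
  have hVU : V * M⁻¹ * U = of ![![α * (r₁ ᵥ* M⁻¹ ⬝ᵥ c₁), α * (r₁ ᵥ* M⁻¹ ⬝ᵥ c₂)],
      ![β * (r₂ ᵥ* M⁻¹ ⬝ᵥ c₁), β * (r₂ ᵥ* M⁻¹ ⬝ᵥ c₂)]] := by
    ext a b
    fin_cases a <;> fin_cases b <;>
      simp [U, V, mul_apply, vecMul, dotProduct, Finset.mul_sum, Finset.sum_mul, mul_assoc]
  rw [add_assoc, ← hUV, det_add_mul U V hM, hVU, det_fin_two]
  simp only [add_apply, one_apply_eq, one_apply_ne zero_ne_one, one_apply_ne one_ne_zero, of_apply,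
    cons_val', cons_val_zero, cons_val_one, cons_val_fin_one, zero_add]
  ring

theorem det_add_smul_vecMulVec_of_isUnit {M : Matrix ι ι R} (hM : IsUnit M.det) (c r : ι → R)
    (α : R) :
    (M + α • vecMulVec c r).det = M.det * (1 + α * (r ᵥ* M⁻¹ ⬝ᵥ c)) := by
  simpa using det_add_smul_vecMulVec_add_smul_vecMulVec_of_isUnit hM c 0 r 0 α 0

theorem det_mul_det_sub_det_mul_det_of_isUnit {M : Matrix ι ι R} (hM : IsUnit M.det)
    (c₁ c₂ r₁ r₂ : ι → R) (α β : R) :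
    (M + α • vecMulVec c₁ r₁ + β • vecMulVec c₂ r₂).det * M.det
        - (M + α • vecMulVec c₁ r₁).det * (M + β • vecMulVec c₂ r₂).det
      = -(α * β) * borderDet M c₁ r₂ * borderDet M c₂ r₁ := by
  rw [det_add_smul_vecMulVec_add_smul_vecMulVec_of_isUnit hM, det_add_smul_vecMulVec_of_isUnit hM,
    det_add_smul_vecMulVec_of_isUnit hM, borderDet_eq_of_isUnit hM, borderDet_eq_of_isUnit hM]
  ring

theorem mapMatrix_add_smul_vecMulVec {S : Type*} [CommRing S] (f : R →+* S) (M : Matrix ι ι R)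
    (c r : ι → R) (α : R) :
    f.mapMatrix (M + α • vecMulVec c r) = f.mapMatrix M + f α • vecMulVec (f ∘ c) (f ∘ r) := by
  ext i j
  simp [vecMulVec_apply]

theorem det_mul_det_sub_det_mul_det [IsDomain R] (M : Matrix ι ι R) (c₁ c₂ r₁ r₂ : ι → R)
    (α β : R) :
    (M + α • vecMulVec c₁ r₁ + β • vecMulVec c₂ r₂).det * M.det
        - (M + α • vecMulVec c₁ r₁).det * (M + β • vecMulVec c₂ r₂).det
      = -(α * β) * borderDet M c₁ r₂ * borderDet M c₂ r₁ := by
  let φ : R[X] →+* FractionRing R[X] := algebraMap _ _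
  -- `P = X • 1 + M`, whose determinant `charpoly (-M)` is monic
  let P : Matrix ι ι R[X] := charmatrix (-M)
  have hP : IsUnit (φ.mapMatrix P).det := by
    rw [← RingHom.map_det, ← charpoly, isUnit_iff_ne_zero,
      map_ne_zero_iff _ (IsFractionRing.injective _ _)]
    exact (charpoly_monic _).ne_zero
  have hpoly : (P + C α • vecMulVec (C ∘ c₁) (C ∘ r₁) + C β • vecMulVec (C ∘ c₂) (C ∘ r₂)).det
        * P.det - (P + C α • vecMulVec (C ∘ c₁) (C ∘ r₁)).det
          * (P + C β • vecMulVec (C ∘ c₂) (C ∘ r₂)).det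
      = -(C α * C β) * borderDet P (C ∘ c₁) (C ∘ r₂) * borderDet P (C ∘ c₂) (C ∘ r₁) := by
    apply IsFractionRing.injective R[X] (FractionRing R[X])
    simpa only [map_sub, map_mul, map_neg, RingHom.map_det, borderDet_map,
      mapMatrix_add_smul_vecMulVec] using det_mul_det_sub_det_mul_det_of_isUnit hP ..
  have heval : (evalRingHom 0).mapMatrix P = M := by
    ext i j
    by_cases h : i = j <;> simp [P, h]
  simpa only [map_sub, map_mul, map_neg, RingHom.map_det, borderDet_map,
    mapMatrix_add_smul_vecMulVec, heval, Function.comp_def, coe_evalRingHom, eval_C]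
    using congrArg (evalRingHom 0) hpoly

variable {m n m' n' : Type*}

theorem fromBlocks_add_smul_vecMulVec₁₁ (A : Matrix m n R) (B : Matrix m n' R)
    (C : Matrix m' n R) (D : Matrix m' n' R) (u : m → R) (v : n → R) (α : R) :
    fromBlocks (A + α • vecMulVec u v) B C D
      = fromBlocks A B C D + α • vecMulVec (Sum.elim u fun _ => 0) (Sum.elim v fun _ => 0) := by
  ext (i | i) (j | j) <;> simp [vecMulVec_apply]

theorem fromBlocks_add_smul_vecMulVec₂₂ (A : Matrix m n R) (B : Matrix m n' R)
    (C : Matrix m' n R) (D : Matrix m' n' R) (u : m' → R) (v : n' → R) (α : R) :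
    fromBlocks A B C (D + α • vecMulVec u v)
      = fromBlocks A B C D + α • vecMulVec (Sum.elim (fun _ => 0) u) (Sum.elim (fun _ => 0) v) := by
  ext (i | i) (j | j) <;> simp [vecMulVec_apply]

end Matrix

section ZpowIdentities

variable {K : Type*} [Field K]

theorem zpow_mul_neg_zpow_neg (x y : K) (n : ℤ) : x ^ n * (-y) ^ (-n) = (-x / y) ^ n := by
  rw [_root_.zpow_neg, ← div_eq_mul_inv, ← div_zpow, div_neg, neg_div]

theorem zpow_neg_mul_zpow (x y : K) (n : ℤ) : x ^ (-n) * y ^ n = (x / y) ^ (-n) := by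
  rw [div_zpow, _root_.zpow_neg y, div_inv_eq_mul]

theorem mul_div_add_mul_neg_div_zpow_add_one {P Q : K} (hP : P ≠ 0) (hQ : Q ≠ 0) (c : K)
    (n : ℤ) : c * Q / (P + Q) * (-P / Q) ^ (n + 1) = -c * P / (P + Q) * (-P / Q) ^ n := by
  rw [zpow_add_one₀ (div_ne_zero (neg_ne_zero.2 hP) hQ)]
  field_simp

theorem mul_div_add_mul_neg_div_zpow_add_one_eq_sub {P Q : K} (hP : P ≠ 0) (hQ : Q ≠ 0)
    (hPQ : P + Q ≠ 0) (c : K) (n : ℤ) :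
    c * Q / (P + Q) * (-P / Q) ^ (n + 1) = c * Q / (P + Q) * (-P / Q) ^ n - c * (-P / Q) ^ n := by
  rw [mul_div_add_mul_neg_div_zpow_add_one hP hQ]
  field_simp
  ring

theorem div_add_mul_div_zpow_neg_add_one {a Q₁ Q₂ : K} (hQ : Q₁ + Q₂ ≠ 0)
    (h₁ : 1 - a * Q₁ ≠ 0) (h₂ : 1 + a * Q₂ ≠ 0) (c w U : K) (k : ℤ) :
    c / (Q₁ + Q₂) * w * ((1 - a * Q₁) / (1 + a * Q₂)) ^ (-(k + 1)) * U
      = c / (Q₁ + Q₂) * w * ((1 - a * Q₁) / (1 + a * Q₂)) ^ (-k) * U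
        + a * c * (w * ((1 - a * Q₁) ^ (-(k + 1)) * (1 + a * Q₂) ^ k) * U) := by
  rw [_root_.zpow_neg, _root_.zpow_neg, _root_.zpow_neg, div_zpow, div_zpow,
    zpow_add_one₀ h₁, zpow_add_one₀ h₂]
  -- otherwise `field_simp` expands `1 - a * Q₁` and no longer cancels it
  generalize hs : 1 - a * Q₁ = s at h₁ ⊢
  field_simp
  rw [← hs]
  ring

end ZpowIdentities

theorem blockDet_mul_blockDet_sub_blockDet_mul_blockDet {N : ℕ} (A B : Matrix (Fin N) (Fin N) ℂ)
    (u v u' v' : Fin N → ℂ) (α β : ℂ) :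
    blockDet (A + α • vecMulVec u v) (B + β • vecMulVec u' v') * blockDet A B
        - blockDet (A + α • vecMulVec u v) B * blockDet A (B + β • vecMulVec u' v')
      = -(α * β) * borderedDet A B (Sum.elim u fun _ => 0) (Sum.elim (fun _ => 0) fun j => -v' j)
          * borderedDet (A + α • vecMulVec u v) (B + β • vecMulVec u' v')
              (Sum.elim (fun _ => 0) u') (Sum.elim (fun j => -v j) fun _ => 0) := by
  have hrow₁ : (Sum.elim (fun j => -v j) fun _ => 0 : Fin N ⊕ Fin N → ℂ)
      = -Sum.elim v fun _ => 0 := by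
    ext (i | i) <;> simp
  have hrow₂ : (Sum.elim (fun _ => 0) fun j => -v' j : Fin N ⊕ Fin N → ℂ)
      = -Sum.elim (fun _ => 0) v' := by
    ext (i | i) <;> simp
  have hbordered : ∀ (A' B' : Matrix (Fin N) (Fin N) ℂ) (c r : Fin N ⊕ Fin N → ℂ),
      borderedDet A' B' c r = borderDet (fromBlocks A' 1 (-1) B') c r := fun _ _ _ _ => rfl
  simp only [blockDet, hbordered, fromBlocks_add_smul_vecMulVec₁₁,
    fromBlocks_add_smul_vecMulVec₂₂, hrow₁, hrow₂, borderDet_neg_row,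
    borderDet_add_smul_vecMulVec_add_smul_vecMulVec, det_mul_det_sub_det_mul_det]
  ring

theorem fully_discrete_bilinear_2_general (N : ℕ)
    (p pb q qb : Fin N → ℂ)
    (hp : ∀ i, p i ≠ 0) (hpb : ∀ i, pb i ≠ 0)
    (hppb : ∀ i j, p i + pb j ≠ 0) (hqqb : ∀ i j, q i + qb j ≠ 0)
    (μ ν : ℂ)
    (a₁ a₂ b₁ b₂ : ℝ) (ha₂ : a₂ ≠ 0)
    (h3 : ∀ i, 1 - (a₂ : ℂ) * q i ≠ 0) (h4 : ∀ j, 1 + (a₂ : ℂ) * qb j ≠ 0)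
    (A : ℤ → ℤ → ℤ → Matrix (Fin N) (Fin N) ℂ)
    (hA : ∀ n k₁ l₁ i j, A n k₁ l₁ i j =
      (μ * pb j / (p i + pb j)) * (-(p i) / pb j) ^ n *
      ((1 - (a₁ : ℂ) * p i) / (1 + (a₁ : ℂ) * pb j)) ^ (-k₁) *
      ((1 - (b₁ : ℂ) / p i) / (1 + (b₁ : ℂ) / pb j)) ^ (-l₁))
    (At : ℤ → ℤ → ℤ → Matrix (Fin N) (Fin N) ℂ)
    (hAt : ∀ n k₁ l₁ i j, At n k₁ l₁ i j =
      (-μ * p i / (p i + pb j)) * (-(p i) / pb j) ^ n *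
      ((1 - (a₁ : ℂ) * p i) / (1 + (a₁ : ℂ) * pb j)) ^ (-k₁) *
      ((1 - (b₁ : ℂ) / p i) / (1 + (b₁ : ℂ) / pb j)) ^ (-l₁))
    (B : ℤ → ℤ → ℤ → Matrix (Fin N) (Fin N) ℂ)
    (hB : ∀ m k₂ l₂ i j, B m k₂ l₂ i j =
      (ν / (q i + qb j)) * (-(q i) / qb j) ^ m *
      ((1 - (a₂ : ℂ) * q i) / (1 + (a₂ : ℂ) * qb j)) ^ (-k₂) *
      ((1 - (b₂ : ℂ) / q i) / (1 + (b₂ : ℂ) / qb j)) ^ (-l₂))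
    (Φ : ℤ → ℤ → ℤ → Fin N → ℂ)
    (hΦ : ∀ n k₁ l₁ j, Φ n k₁ l₁ j =
      p j ^ n * (1 - (a₁ : ℂ) * p j) ^ (-k₁) * (1 - (b₁ : ℂ) / p j) ^ (-l₁))
    (Φb : ℤ → ℤ → ℤ → Fin N → ℂ)
    (hΦb : ∀ n k₁ l₁ j, Φb n k₁ l₁ j =
      (-(pb j)) ^ (-n) * (1 + (a₁ : ℂ) * pb j) ^ k₁ * (1 + (b₁ : ℂ) / pb j) ^ l₁)
    (Ψ : ℤ → ℤ → ℤ → Fin N → ℂ)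
    (hΨ : ∀ m k₂ l₂ j, Ψ m k₂ l₂ j =
      q j ^ m * (1 - (a₂ : ℂ) * q j) ^ (-k₂) * (1 - (b₂ : ℂ) / q j) ^ (-l₂))
    (Ψb : ℤ → ℤ → ℤ → Fin N → ℂ)
    (hΨb : ∀ m k₂ l₂ j, Ψb m k₂ l₂ j =
      (-(qb j)) ^ (-m) * (1 + (a₂ : ℂ) * qb j) ^ k₂ * (1 + (b₂ : ℂ) / qb j) ^ l₂)
    (f : ℤ → ℤ → ℤ → ℤ → ℤ → ℤ → ℂ)
    (hf : ∀ m k₂ l₂ n k₁ l₁, f m k₂ l₂ n k₁ l₁ = blockDet (A n k₁ l₁) (B m k₂ l₂))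
    (g : ℤ → ℤ → ℤ → ℤ → ℤ → ℤ → ℂ)
    (hg : ∀ m k₂ l₂ n k₁ l₁, g m k₂ l₂ n k₁ l₁ = borderedDet (A n k₁ l₁) (B m k₂ l₂)
      (Sum.elim (Φ n k₁ l₁) (fun _ => 0))
      (Sum.elim (fun _ => 0) (fun j => -(Ψb m k₂ l₂ j))))
    (gb : ℤ → ℤ → ℤ → ℤ → ℤ → ℤ → ℂ)
    (hgb : ∀ m k₂ l₂ n k₁ l₁, gb m k₂ l₂ n k₁ l₁ = borderedDet (At n k₁ l₁) (B m k₂ l₂)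
      (Sum.elim (fun _ => 0) (Ψ m k₂ l₂))
      (Sum.elim (fun j => -(Φb n k₁ l₁ j)) (fun _ => 0))) :
    ∀ n k₁ l₁ m k₂ l₂ : ℤ,
      (1 / (a₂ : ℂ)) * (f m (k₂ + 1) l₂ (n + 1) k₁ l₁ * f m k₂ l₂ n k₁ l₁
        - f m k₂ l₂ (n + 1) k₁ l₁ * f m (k₂ + 1) l₂ n k₁ l₁)
      = μ * ν * g m k₂ l₂ n k₁ l₁ * gb m (k₂ + 1) l₂ n k₁ l₁ := by
  intro n k₁ l₁ m k₂ l₂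
  have hA_succ : A (n + 1) k₁ l₁ = A n k₁ l₁ + (-μ) • vecMulVec (Φ n k₁ l₁) (Φb n k₁ l₁) := by
    ext i j
    rw [Matrix.add_apply, Matrix.smul_apply, vecMulVec_apply, hA, hA, hΦ, hΦb, smul_eq_mul,
      mul_div_add_mul_neg_div_zpow_add_one_eq_sub (hp i) (hpb j) (hppb i j)]
    simp only [← zpow_neg_mul_zpow, ← zpow_mul_neg_zpow_neg]
    ring
  have hB_succ : B m (k₂ + 1) l₂
      = B m k₂ l₂ + ((a₂ : ℂ) * ν) • vecMulVec (Ψ m (k₂ + 1) l₂) (Ψb m k₂ l₂) := by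
    ext i j
    rw [Matrix.add_apply, Matrix.smul_apply, vecMulVec_apply, hB, hB, hΨ, hΨb, smul_eq_mul,
      div_add_mul_div_zpow_neg_add_one (hqqb i j) (h3 i) (h4 j)]
    simp only [← zpow_neg_mul_zpow, ← zpow_mul_neg_zpow_neg]
    ring
  have hAt_eq : At n k₁ l₁ = A (n + 1) k₁ l₁ := by
    ext i j
    rw [hAt, hA, mul_div_add_mul_neg_div_zpow_add_one (hp i) (hpb j)]
  rw [hf, hf, hf, hf, hg, hgb, hAt_eq, hA_succ, hB_succ,
    blockDet_mul_blockDet_sub_blockDet_mul_blockDet]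
  have ha₂' : (a₂ : ℂ) ≠ 0 := Complex.ofReal_ne_zero.2 ha₂
  field_simp

/-- Second fully discrete bilinear equation for the Gram-type tau functions of the
two-component fully discrete KP–Toda hierarchy. -/
theorem fully_discrete_bilinear_2 (N : ℕ) (hN : 1 ≤ N)
    (p pb q qb : Fin N → ℂ)
    (hp : ∀ i, p i ≠ 0) (hpb : ∀ i, pb i ≠ 0) (hq : ∀ i, q i ≠ 0) (hqb : ∀ i, qb i ≠ 0)
    (hppb : ∀ i j, p i + pb j ≠ 0) (hqqb : ∀ i j, q i + qb j ≠ 0)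
    (μ ν : ℂ)
    (a₁ a₂ b₁ b₂ : ℝ) (ha₁ : a₁ ≠ 0) (ha₂ : a₂ ≠ 0) (hb₁ : b₁ ≠ 0) (hb₂ : b₂ ≠ 0)
    (h1 : ∀ i, 1 - (a₁ : ℂ) * p i ≠ 0) (h2 : ∀ j, 1 + (a₁ : ℂ) * pb j ≠ 0)
    (h3 : ∀ i, 1 - (a₂ : ℂ) * q i ≠ 0) (h4 : ∀ j, 1 + (a₂ : ℂ) * qb j ≠ 0)
    (h5 : ∀ i, 1 - (b₁ : ℂ) / p i ≠ 0) (h6 : ∀ j, 1 + (b₁ : ℂ) / pb j ≠ 0)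
    (h7 : ∀ i, 1 - (b₂ : ℂ) / q i ≠ 0) (h8 : ∀ j, 1 + (b₂ : ℂ) / qb j ≠ 0)
    (A : ℤ → ℤ → ℤ → Matrix (Fin N) (Fin N) ℂ)
    (hA : ∀ n k₁ l₁ i j, A n k₁ l₁ i j =
      (μ * pb j / (p i + pb j)) * (-(p i) / pb j) ^ n *
      ((1 - (a₁ : ℂ) * p i) / (1 + (a₁ : ℂ) * pb j)) ^ (-k₁) *
      ((1 - (b₁ : ℂ) / p i) / (1 + (b₁ : ℂ) / pb j)) ^ (-l₁))
    (At : ℤ → ℤ → ℤ → Matrix (Fin N) (Fin N) ℂ)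
    (hAt : ∀ n k₁ l₁ i j, At n k₁ l₁ i j =
      (-μ * p i / (p i + pb j)) * (-(p i) / pb j) ^ n *
      ((1 - (a₁ : ℂ) * p i) / (1 + (a₁ : ℂ) * pb j)) ^ (-k₁) *
      ((1 - (b₁ : ℂ) / p i) / (1 + (b₁ : ℂ) / pb j)) ^ (-l₁))
    (B : ℤ → ℤ → ℤ → Matrix (Fin N) (Fin N) ℂ)
    (hB : ∀ m k₂ l₂ i j, B m k₂ l₂ i j =
      (ν / (q i + qb j)) * (-(q i) / qb j) ^ m *
      ((1 - (a₂ : ℂ) * q i) / (1 + (a₂ : ℂ) * qb j)) ^ (-k₂) *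
      ((1 - (b₂ : ℂ) / q i) / (1 + (b₂ : ℂ) / qb j)) ^ (-l₂))
    (Φ : ℤ → ℤ → ℤ → Fin N → ℂ)
    (hΦ : ∀ n k₁ l₁ j, Φ n k₁ l₁ j =
      p j ^ n * (1 - (a₁ : ℂ) * p j) ^ (-k₁) * (1 - (b₁ : ℂ) / p j) ^ (-l₁))
    (Φb : ℤ → ℤ → ℤ → Fin N → ℂ)
    (hΦb : ∀ n k₁ l₁ j, Φb n k₁ l₁ j =
      (-(pb j)) ^ (-n) * (1 + (a₁ : ℂ) * pb j) ^ k₁ * (1 + (b₁ : ℂ) / pb j) ^ l₁)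
    (Ψ : ℤ → ℤ → ℤ → Fin N → ℂ)
    (hΨ : ∀ m k₂ l₂ j, Ψ m k₂ l₂ j =
      q j ^ m * (1 - (a₂ : ℂ) * q j) ^ (-k₂) * (1 - (b₂ : ℂ) / q j) ^ (-l₂))
    (Ψb : ℤ → ℤ → ℤ → Fin N → ℂ)
    (hΨb : ∀ m k₂ l₂ j, Ψb m k₂ l₂ j =
      (-(qb j)) ^ (-m) * (1 + (a₂ : ℂ) * qb j) ^ k₂ * (1 + (b₂ : ℂ) / qb j) ^ l₂)
    (f : ℤ → ℤ → ℤ → ℤ → ℤ → ℤ → ℂ)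
    (hf : ∀ m k₂ l₂ n k₁ l₁, f m k₂ l₂ n k₁ l₁ = blockDet (A n k₁ l₁) (B m k₂ l₂))
    (g : ℤ → ℤ → ℤ → ℤ → ℤ → ℤ → ℂ)
    (hg : ∀ m k₂ l₂ n k₁ l₁, g m k₂ l₂ n k₁ l₁ = borderedDet (A n k₁ l₁) (B m k₂ l₂)
      (Sum.elim (Φ n k₁ l₁) (fun _ => 0))
      (Sum.elim (fun _ => 0) (fun j => -(Ψb m k₂ l₂ j))))
    (gb : ℤ → ℤ → ℤ → ℤ → ℤ → ℤ → ℂ)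
    (hgb : ∀ m k₂ l₂ n k₁ l₁, gb m k₂ l₂ n k₁ l₁ = borderedDet (At n k₁ l₁) (B m k₂ l₂)
      (Sum.elim (fun _ => 0) (Ψ m k₂ l₂))
      (Sum.elim (fun j => -(Φb n k₁ l₁ j)) (fun _ => 0))) :
    ∀ n k₁ l₁ m k₂ l₂ : ℤ,
      (1 / (a₂ : ℂ)) * (f m (k₂ + 1) l₂ (n + 1) k₁ l₁ * f m k₂ l₂ n k₁ l₁
        - f m k₂ l₂ (n + 1) k₁ l₁ * f m (k₂ + 1) l₂ n k₁ l₁)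
      = μ * ν * g m k₂ l₂ n k₁ l₁ * gb m (k₂ + 1) l₂ n k₁ l₁ :=
  fully_discrete_bilinear_2_general N p pb q qb hp hpb hppb hqqb μ ν a₁ a₂ b₁ b₂ ha₂ h3 h4 A hA At
    hAt B hB Φ hΦ Φb hΦb Ψ hΨ Ψb hΨb f hf g hg gb hgb
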